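/- arXiv:2011.09932 — 5 statements merged into one kernel-verified Lean document; each statement's English description precedes it below -/
import Mathlib

section
/- A monotone (0,1)-matrix A of size m×n (with nonincreasing row sums r_1 ≥ ... ≥ r_m and nonincreasing column sums c_1 ≥ ... ≥ c_n) with prescribed row sum tuple r and column sum tuple c exists if and only if r is majorized by the conjugate s of c. -/
/-- Row sums of a matrix. -/
def rowSum {m n : ℕ} (A : Matrix (Fin m) (Fin n) ℕ) (i : Fin m) : ℕ := ∑ j, A i j

/-- Column sums of a matrix. -/
def colSum {m n : ℕ} (A : Matrix (Fin m) (Fin n) ℕ) (j : Fin n) : ℕ := ∑ i, A i j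

/-- A (0,1)-matrix. -/
def ZeroOne {m n : ℕ} (A : Matrix (Fin m) (Fin n) ℕ) : Prop := ∀ i j, A i j ≤ 1

/-- A matrix is monotone if its row sums and column sums are nonincreasing. -/
def MonotoneMat {m n : ℕ} (A : Matrix (Fin m) (Fin n) ℕ) : Prop :=
  Antitone (rowSum A) ∧ Antitone (colSum A)

/-- The conjugate of the tuple `c`, with respect to bound `m`:
`s i = |{j : c j ≥ i}|` where `i` is read 1-indexed (so `i : Fin m` stands for `i+1`). -/
def conjTuple (m : ℕ) {n : ℕ} (c : Fin n → ℕ) (i : Fin m) : ℕ :=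
  (Finset.univ.filter (fun j => (i : ℕ) + 1 ≤ c j)).card

/-- `r` is majorized by `s`: partial sums of `r` are dominated by those of `s`,
with equal total sums. -/
def MajorizedBy {m : ℕ} (r s : Fin m → ℕ) : Prop :=
  (∀ h : Fin m, ∑ i ∈ Finset.Iic h, r i ≤ ∑ i ∈ Finset.Iic h, s i) ∧
  (∑ i, r i = ∑ i, s i)

/-- The type of a tuple: the number of distinct nonzero values among its components. -/
def tupleType {n : ℕ} (c : Fin n → ℕ) : ℕ :=
  ((Finset.univ.image c).filter (fun x => x ≠ 0)).card

/-
Necessity: the first `h` rows of a (0,1)-matrix meet column `j` in at most `min h c_j` ones,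
and `∑ j, min h c_j` is the `h`-th partial sum of the conjugate `s` of `c`.

Sufficiency: the Ferrers matrix, whose column `j` is filled in its top `c_j` rows, has row sums
`s` and column sums `c`. While `r ≠ s`, let `k` be the first index with `s_k < r_k` and `i < k`
an index with `r_i < s_i`. Then `s_k < r_k ≤ r_i < s_i`, so some column has a one in row `i` and
a zero in row `k`; moving that one to row `k` keeps the column sums, transfers a unit of row sum
from `i` to `k`, keeps `r` majorized and lowers `∑ t, (s_t - r_t)`. The matrix finally reached
is monotone because its row and column sums are `r` and `c`.
-/

open Finset

section Transfer

variable {ι : Type*} [DecidableEq ι]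

def transfer (s : ι → ℕ) (i k : ι) : ι → ℕ :=
  Function.update (Function.update s i (s i - 1)) k (s k + 1)

variable {s : ι → ℕ} {i k : ι}

lemma transfer_add_ite (hik : i ≠ k) (hi : 1 ≤ s i) (t : ι) :
    transfer s i k t + (if t = i then 1 else 0) = s t + (if t = k then 1 else 0) := by
  by_cases htk : t = k
  · subst htk; simp [transfer, Ne.symm hik]
  · by_cases hti : t = i
    · subst hti; simp [transfer, htk]; omega
    · simp [transfer, htk, hti]

lemma sum_transfer_add_ite (hik : i ≠ k) (hi : 1 ≤ s i) (S : Finset ι) :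
    ∑ t ∈ S, transfer s i k t + (if i ∈ S then 1 else 0) =
      ∑ t ∈ S, s t + (if k ∈ S then 1 else 0) := by
  have := sum_congr rfl fun t (_ : t ∈ S) => transfer_add_ite hik hi t
  simpa only [sum_add_distrib, sum_ite_eq'] using this

lemma eq_transfer_of_add_ite (hik : i ≠ k) (hi : 1 ≤ s i) {f : ι → ℕ}
    (hf : ∀ t, f t + (if t = i then 1 else 0) = s t + (if t = k then 1 else 0)) :
    f = transfer s i k :=
  funext fun t => by have := transfer_add_ite hik hi t; have := hf t; omega

def excess [Fintype ι] (r s : ι → ℕ) : ℕ := ∑ t, (s t - r t)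

lemma excess_transfer_lt [Fintype ι] {r : ι → ℕ} (hik : i ≠ k) (hi : r i < s i) (hk : s k < r k) :
    excess r (transfer s i k) < excess r s := by
  refine sum_lt_sum (fun t _ => ?_) ⟨i, mem_univ i, ?_⟩
  · have := transfer_add_ite hik (by omega : 1 ≤ s i) t
    split_ifs at this with hti htk htk
    · exact absurd (hti.symm.trans htk) hik
    · omega
    · subst htk; omega
    · omega
  · have := transfer_add_ite hik (by omega : 1 ≤ s i) i
    rw [if_pos rfl, if_neg hik] at this
    omega

end Transfer

section Majorization

variable {m : ℕ} {r s : Fin m → ℕ}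

lemma MajorizedBy.exists_transfer_pair (hrs : MajorizedBy r s) (hne : r ≠ s) :
    ∃ i k, i < k ∧ r i < s i ∧ s k < r k ∧ ∀ t < k, r t ≤ s t := by
  have hex : ∃ k, s k < r k := by
    by_contra! hle
    exact hne <| funext fun t =>
      (sum_eq_sum_iff_of_le fun t _ => hle t).1 hrs.2 t (mem_univ t)
  obtain ⟨k, hk, hmin⟩ := wellFounded_lt.has_min {t | s t < r t} hex
  have hle : ∀ t < k, r t ≤ s t := fun t htk => by
    by_contra! hst; exact hmin t hst htk
  have hIio : ∑ t ∈ Iio k, r t < ∑ t ∈ Iio k, s t := by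
    have := hrs.1 k
    rw [← Iio_insert, sum_insert (by simp), sum_insert (by simp)] at this
    exact lt_of_add_lt_add_left (lt_of_le_of_lt' this (by simpa using hk))
  obtain ⟨i, hi, hri⟩ := exists_lt_of_sum_lt hIio
  exact ⟨i, k, mem_Iio.1 hi, hri, hk, hle⟩

lemma MajorizedBy.transfer (hrs : MajorizedBy r s) {i k : Fin m} (hik : i < k)
    (hi : r i < s i) (hle : ∀ t < k, r t ≤ s t) : MajorizedBy r (transfer s i k) := by
  have hi1 : 1 ≤ s i := by omega
  constructor
  · intro h
    have key := sum_transfer_add_ite hik.ne hi1 (Iic h)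
    simp only [mem_Iic] at key
    have := hrs.1 h
    by_cases hkh : k ≤ h
    · rw [if_pos (hik.le.trans hkh), if_pos hkh] at key; omega
    by_cases hih : i ≤ h
    · have strict : ∑ t ∈ Iic h, r t < ∑ t ∈ Iic h, s t :=
        sum_lt_sum (fun t ht => hle t ((mem_Iic.1 ht).trans_lt (not_le.1 hkh)))
          ⟨i, mem_Iic.2 hih, hi⟩
      rw [if_pos hih, if_neg hkh] at key; omega
    · rw [if_neg hih, if_neg hkh] at key; omega
  · have key := sum_transfer_add_ite hik.ne hi1 univ
    simp only [mem_univ, if_true, add_left_inj] at key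
    rw [key]; exact hrs.2

end Majorization

section ZeroOneMatrix

variable {m n : ℕ}

lemma sum_update_add {ι M : Type*} [Fintype ι] [DecidableEq ι] [AddCommMonoid M]
    (f : ι → M) (j : ι) (b : M) : ∑ x, Function.update f j b x + f j = ∑ x, f x + b := by
  rw [sum_update_of_mem (mem_univ j), ← add_sum_erase univ f (mem_univ j),
    sdiff_singleton_eq_erase]
  abel

lemma ZeroOne.exists_one_zero_of_rowSum_lt {M : Matrix (Fin m) (Fin n) ℕ} (hM : ZeroOne M)
    {i k : Fin m} (hlt : rowSum M k < rowSum M i) : ∃ j, M i j = 1 ∧ M k j = 0 := by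
  by_contra! h
  refine hlt.not_ge (sum_le_sum fun j _ => ?_)
  have := hM i j
  have := hM k j
  have := h j
  omega

lemma ZeroOne.exists_rowSum_eq_transfer {M : Matrix (Fin m) (Fin n) ℕ} (hM : ZeroOne M)
    {i k : Fin m} (hik : i ≠ k) (hlt : rowSum M k < rowSum M i) :
    ∃ M', ZeroOne M' ∧ rowSum M' = transfer (rowSum M) i k ∧ colSum M' = colSum M := by
  obtain ⟨j, hij, hkj⟩ := hM.exists_one_zero_of_rowSum_lt hlt
  let M' : Matrix (Fin m) (Fin n) ℕ := fun a => Function.update (M a) j (M (Equiv.swap i k a) j)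
  refine ⟨M', fun a b => ?_, eq_transfer_of_add_ite hik (by omega) fun a => ?_, funext fun b => ?_⟩
  · simp only [M', Function.update_apply]
    split_ifs <;> apply hM
  · have hrow := sum_update_add (M a) j (M (Equiv.swap i k a) j)
    change rowSum M' a + M a j = rowSum M a + M (Equiv.swap i k a) j at hrow
    by_cases hai : a = i
    · subst hai; simp_all
    by_cases hak : a = k
    · subst hak; simp_all
    · simp_all [Equiv.swap_apply_of_ne_of_ne]
  · by_cases hb : b = j
    · subst hb
      simpa [colSum, M'] using Equiv.sum_comp (Equiv.swap i k) (fun a => M a b)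
    · simp [colSum, M', hb]

theorem ZeroOne.exists_rowSum_eq_of_majorizedBy {r : Fin m → ℕ} (hr : Antitone r)
    {M : Matrix (Fin m) (Fin n) ℕ} (hM : ZeroOne M) (hrs : MajorizedBy r (rowSum M)) :
    ∃ M', ZeroOne M' ∧ rowSum M' = r ∧ colSum M' = colSum M := by
  induction hN : excess r (rowSum M) using Nat.strong_induction_on generalizing M with
  | _ N ih =>
  by_cases heq : r = rowSum M
  · exact ⟨M, hM, heq.symm, rfl⟩
  obtain ⟨i, k, hik, hi, hk, hle⟩ := hrs.exists_transfer_pair heq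
  obtain ⟨M', hM', hrow, hcol⟩ := hM.exists_rowSum_eq_transfer hik.ne (by have := hr hik.le; omega)
  obtain ⟨M'', hM'', hrow', hcol'⟩ := ih _ (hN ▸ hrow ▸ excess_transfer_lt hik.ne hi hk) hM'
    (hrow ▸ hrs.transfer hik hi hle) rfl
  exact ⟨M'', hM'', hrow', hcol'.trans hcol⟩

end ZeroOneMatrix

section Conjugate

variable {m n : ℕ}

lemma sum_conjTuple (c : Fin n → ℕ) (S : Finset (Fin m)) :
    ∑ t ∈ S, conjTuple m c t = ∑ j, #{t ∈ S | t.val < c j} := by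
  simp only [conjTuple, card_filter]
  exact sum_comm

lemma card_filter_Iic_val_lt (h : Fin m) (K : ℕ) :
    #{t ∈ Iic h | t.val < K} = min (h.val + 1) K := by
  have : (Iic h).filter (·.val < K) = univ.filter (·.val < min (h.val + 1) K) := by
    ext t
    simp only [mem_filter, mem_Iic, mem_univ, true_and, Fin.le_def]
    omega
  rw [this, Fin.card_filter_val_lt]
  omega

lemma ZeroOne.colSum_le {M : Matrix (Fin m) (Fin n) ℕ} (hM : ZeroOne M) (j : Fin n) :
    colSum M j ≤ m :=
  (sum_le_sum fun i _ => hM i j).trans (by simp)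

lemma sum_rowSum_eq_sum_colSum (M : Matrix (Fin m) (Fin n) ℕ) :
    ∑ i, rowSum M i = ∑ j, colSum M j :=
  sum_comm

theorem ZeroOne.majorizedBy_conjTuple {M : Matrix (Fin m) (Fin n) ℕ} (hM : ZeroOne M) :
    MajorizedBy (rowSum M) (conjTuple m (colSum M)) := by
  constructor
  · intro h
    rw [sum_conjTuple]
    simp_rw [card_filter_Iic_val_lt]
    calc ∑ t ∈ Iic h, rowSum M t = ∑ j, ∑ t ∈ Iic h, M t j := sum_comm
      _ ≤ _ := sum_le_sum fun j _ =>
        le_min ((sum_le_sum fun t _ => hM t j).trans (by simp))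
          (sum_le_sum_of_subset (subset_univ _))
  · rw [sum_conjTuple, sum_rowSum_eq_sum_colSum]
    simp only [Fin.card_filter_val_lt]
    exact sum_congr rfl fun j _ => (min_eq_right (hM.colSum_le j)).symm

def ferrersMatrix (m : ℕ) (c : Fin n → ℕ) : Matrix (Fin m) (Fin n) ℕ :=
  fun i j => if (i : ℕ) < c j then 1 else 0

lemma zeroOne_ferrersMatrix (c : Fin n → ℕ) : ZeroOne (ferrersMatrix m c) := by
  intro i j
  unfold ferrersMatrix
  split_ifs <;> omega

lemma rowSum_ferrersMatrix (c : Fin n → ℕ) : rowSum (ferrersMatrix m c) = conjTuple m c := by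
  funext i
  simp only [rowSum, ferrersMatrix, conjTuple, card_filter]
  -- on `ℕ`, `a < b` unfolds to the `a + 1 ≤ b` used by `conjTuple`
  rfl

lemma colSum_ferrersMatrix {c : Fin n → ℕ} (hc : ∀ j, c j ≤ m) :
    colSum (ferrersMatrix m c) = c := by
  funext j
  simp only [colSum, ferrersMatrix, ← card_filter, Fin.card_filter_val_lt]
  exact min_eq_right (hc j)

end Conjugate

/-- Gale–Ryser: a monotone (0,1)-matrix with prescribed nonincreasing row sums r
and column sums c exists iff r is majorized by the conjugate of c. -/
theorem gale_ryser (m n : ℕ) (r : Fin m → ℕ) (c : Fin n → ℕ)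
    (hr : Antitone r) (hc : Antitone c) (hcm : ∀ j, c j ≤ m) :
    (∃ A : Matrix (Fin m) (Fin n) ℕ, ZeroOne A ∧ MonotoneMat A ∧
      rowSum A = r ∧ colSum A = c) ↔ MajorizedBy r (conjTuple m c) := by
  constructor
  · rintro ⟨A, hA, -, rfl, rfl⟩
    exact hA.majorizedBy_conjTuple
  · intro hrs
    obtain ⟨A, hA, hrow, hcol⟩ := (zeroOne_ferrersMatrix c).exists_rowSum_eq_of_majorizedBy hr
      (by rwa [rowSum_ferrersMatrix])
    rw [colSum_ferrersMatrix hcm] at hcol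
    exact ⟨A, hA, ⟨hrow ▸ hr, hcol ▸ hc⟩, hrow, hcol⟩
end

section
/- If s is the conjugate of a nonincreasing tuple c with all components at most m, then c and s have the same type, i.e., the number of distinct nonzero values among the components of c equals the number of distinct nonzero values among the components of s. -/
/-!
With `N v = #{j | v ≤ c j}`, the conjugate is `i ↦ N (i + 1)`. On the values of `c` the function
`N` is strictly decreasing, hence injective; every nonzero `N (i + 1)` equals `N w` for the least
value `w ≥ i + 1` of `c`, and the bound `c ≤ m` makes every `N (c j)` with `c j ≠ 0` a component
of the conjugate. So `N` maps the nonzero values of `c` bijectively onto those of the conjugate.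
-/

open Finset

section CountAtLeast

variable {ι : Type*} [Fintype ι] (c : ι → ℕ)

def countAtLeast (v : ℕ) : ℕ := #{j | v ≤ c j}

variable {c}

theorem countAtLeast_pos (j : ι) : 0 < countAtLeast c (c j) :=
  card_pos.mpr ⟨j, by simp⟩

theorem strictAntiOn_countAtLeast : StrictAntiOn (countAtLeast c) (Set.range c) := by
  rintro _ ⟨j, rfl⟩ b - hjb
  refine card_lt_card ((ssubset_iff_of_subset ?_).mpr ⟨j, ?_⟩)
  · exact monotone_filter_right _ fun _ _ hk => (hjb.trans_le hk).le
  · simpa using hjb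

theorem exists_countAtLeast_eq {v : ℕ} (hv : countAtLeast c v ≠ 0) :
    ∃ j, v ≤ c j ∧ countAtLeast c (c j) = countAtLeast c v := by
  obtain ⟨j, hj, hmin⟩ := exists_min_image {k | v ≤ c k} c (card_ne_zero.mp hv)
  rw [mem_filter_univ] at hj
  refine ⟨j, hj, congrArg card (filter_congr fun k _ => ⟨hj.trans, fun hk => ?_⟩)⟩
  exact hmin k ((mem_filter_univ k).mpr hk)

end CountAtLeast

theorem conjTuple_eq_countAtLeast (m : ℕ) {n : ℕ} (c : Fin n → ℕ) (i : Fin m) :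
    conjTuple m c i = countAtLeast c (i + 1) :=
  rfl

theorem image_countAtLeast_nonzero_values {m n : ℕ} {c : Fin n → ℕ} (hcm : ∀ j, c j ≤ m) :
    {x ∈ univ.image c | x ≠ 0}.image (countAtLeast c) = {x ∈ univ.image (conjTuple m c) | x ≠ 0} := by
  ext x
  simp only [mem_image, mem_filter, mem_univ, true_and, conjTuple_eq_countAtLeast]
  constructor
  · rintro ⟨_, ⟨⟨j, rfl⟩, hj⟩, rfl⟩
    refine ⟨⟨⟨c j - 1, by have := hcm j; omega⟩, ?_⟩, (countAtLeast_pos j).ne'⟩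
    simp only [Nat.sub_add_cancel (Nat.pos_of_ne_zero hj)]
  · rintro ⟨⟨i, rfl⟩, hi⟩
    obtain ⟨j, hij, hj⟩ := exists_countAtLeast_eq hi
    exact ⟨c j, ⟨⟨j, rfl⟩, by omega⟩, hj⟩

theorem conjTuple_tupleType_general (m n : ℕ) (c : Fin n → ℕ)
    (hcm : ∀ j, c j ≤ m) :
    tupleType (conjTuple m c) = tupleType c := by
  rw [tupleType, tupleType, ← image_countAtLeast_nonzero_values hcm, card_image_of_injOn]
  refine strictAntiOn_countAtLeast.injOn.mono fun x hx => ?_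
  simpa using (mem_filter.mp hx).1

/-- A nonincreasing tuple and its conjugate have the same type. -/
theorem conjTuple_tupleType (m n : ℕ) (c : Fin n → ℕ)
    (hc : Antitone c) (hcm : ∀ j, c j ≤ m) :
    tupleType (conjTuple m c) = tupleType c :=
  conjTuple_tupleType_general m n c hcm
end

section
/- Given nonnegative integer tuples r = (r_1,...,r_m) with each r_i ≤ n and c = (c_1,...,c_n) with each c_j ≤ m and Σ r_i = Σ c_j, there exists a (0,1)-matrix with row sums r and column sums c if and only if for every subset S ⊆ [m] and T ⊆ [n]: Σ_{i∈S} r_i ≤ |S|·(n−|T|) + Σ_{j∈T} c_j (equivalently, by the max-flow min-cut characterization of the associated bipartite flow network). -/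
/-!
The cut condition is equivalent to `∑_{i ∈ S} r i ≤ ∑_j min |S| (c j)` for all row sets `S`,
the best `T` being the columns with `c j ≤ |S|`. This is necessary: the rows of `S` put at most
`min |S| (c j)` ones in column `j`. It is sufficient by Ryser's greedy construction: fill one
row `i₀` with ones in a set `J` of `r i₀` columns of largest `c j`; the condition survives for
the remaining rows and the reduced column sums, since a column of `J` with `c j ≤ |S|` forces
every column with `c j > |S|` into `J` as well, and then the condition for `S ∪ {i₀}` pays for
the loss.
-/

open Finset

variable {ι κ : Type*} [Fintype κ]

def IsZeroOneRealization [Fintype ι] (A : Matrix ι κ ℕ) (r : ι → ℕ) (c : κ → ℕ) : Prop :=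
  (∀ i j, A i j ≤ 1) ∧ (∀ i, ∑ j, A i j = r i) ∧ ∀ j, ∑ i, A i j = c j

def GaleRyserCondition (r : ι → ℕ) (c : κ → ℕ) : Prop :=
  ∀ S : Finset ι, ∑ i ∈ S, r i ≤ ∑ j, min #S (c j)

section SumMin

variable (c : κ → ℕ) (s : ℕ)

theorem sum_min_le_cut [DecidableEq κ] (T : Finset κ) :
    ∑ j, min s (c j) ≤ s * (Fintype.card κ - #T) + ∑ j ∈ T, c j := by
  rw [← sum_add_sum_compl T, add_comm]
  gcongr ?_ + ?_
  · calc ∑ j ∈ Tᶜ, min s (c j) ≤ ∑ _j ∈ Tᶜ, s := sum_le_sum fun _ _ => min_le_left _ _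
      _ = s * (Fintype.card κ - #T) := by rw [sum_const, card_compl, smul_eq_mul, mul_comm]
  · exact sum_le_sum fun _ _ => min_le_right _ _

theorem sum_min_eq_cut_filter :
    ∑ j, min s (c j) = s * (Fintype.card κ - #{j | c j ≤ s}) + ∑ j with c j ≤ s, c j := by
  rw [← sum_filter_not_add_sum_filter univ (fun j => c j ≤ s)]
  congr 1
  · rw [sum_congr rfl fun j hj => min_eq_left (not_le.1 (mem_filter.1 hj).2).le, sum_const,
      smul_eq_mul, mul_comm, ← card_univ,
      ← card_filter_add_card_filter_not (s := univ) (fun j => c j ≤ s), Nat.add_sub_cancel_left]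
  · exact sum_congr rfl fun j hj => min_eq_right (mem_filter.1 hj).2

theorem sum_min_succ :
    ∑ j, min (s + 1) (c j) = ∑ j, min s (c j) + #{j | s + 1 ≤ c j} := by
  rw [card_filter, ← sum_add_distrib]
  exact sum_congr rfl fun j _ => by split_ifs <;> omega

theorem sum_min_eq_sum_min_sub_one [DecidableEq κ] {J : Finset κ} (hJ : ∀ j ∈ J, 1 ≤ c j) :
    ∑ j, min s (c j) =
      ∑ j, min s (if j ∈ J then c j - 1 else c j) + #{j | j ∈ J ∧ c j ≤ s} := by
  rw [card_filter, ← sum_add_distrib]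
  refine sum_congr rfl fun j _ => ?_
  by_cases hj : j ∈ J
  · have := hJ j hj
    by_cases hcj : c j ≤ s <;> simp only [hj, hcj, if_true, if_false, true_and] <;> omega
  · simp [hj]

end SumMin

theorem galeRyserCondition_iff_cut [DecidableEq κ] (r : ι → ℕ) (c : κ → ℕ) :
    GaleRyserCondition r c ↔ ∀ (S : Finset ι) (T : Finset κ),
      ∑ i ∈ S, r i ≤ #S * (Fintype.card κ - #T) + ∑ j ∈ T, c j := by
  refine ⟨fun h S T => (h S).trans (sum_min_le_cut c _ T), fun h S => ?_⟩
  rw [sum_min_eq_cut_filter]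
  exact h S _

theorem IsZeroOneRealization.galeRyserCondition [Fintype ι] {A : Matrix ι κ ℕ} {r : ι → ℕ}
    {c : κ → ℕ} (hA : IsZeroOneRealization A r c) : GaleRyserCondition r c := by
  obtain ⟨h01, hrow, hcol⟩ := hA
  intro S
  calc ∑ i ∈ S, r i = ∑ j, ∑ i ∈ S, A i j := by simp_rw [← hrow]; exact sum_comm
    _ ≤ ∑ j, min #S (c j) := sum_le_sum fun j _ => le_min
        (card_eq_sum_ones S ▸ sum_le_sum fun i _ => h01 i j)
        (hcol j ▸ sum_le_sum_of_subset (subset_univ S))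

theorem exists_card_eq_forall_notMem_le [DecidableEq κ] (c : κ → ℕ) {k : ℕ}
    (hk : k ≤ Fintype.card κ) : ∃ J : Finset κ, #J = k ∧ ∀ j ∈ J, ∀ j' ∉ J, c j' ≤ c j := by
  obtain ⟨J, hJ, hJmax⟩ := exists_max_image (powersetCard k univ) (fun J => ∑ j ∈ J, c j)
    (powersetCard_nonempty.2 (by simpa using hk))
  have hJcard : #J = k := (mem_powersetCard.1 hJ).2
  refine ⟨J, hJcard, fun j hj j' hj' => not_lt.1 fun hlt => ?_⟩
  have hj'' : j' ∉ J.erase j := fun h => hj' (mem_of_mem_erase h)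
  have hswap := hJmax (insert j' (J.erase j)) <| mem_powersetCard.2
    ⟨subset_univ _, by rw [card_insert_of_notMem hj'', card_erase_add_one hj, hJcard]⟩
  rw [sum_insert hj'', ← sum_erase_add J c hj] at hswap
  omega

theorem le_of_mem_of_card_le_card_filter {α : Type*} [LinearOrder α] [DecidableEq κ]
    {c : κ → α} {J : Finset κ} (hJ : ∀ j ∈ J, ∀ j' ∉ J, c j' ≤ c j) {t : α}
    (hcard : #J ≤ #{j | t ≤ c j}) : ∀ j ∈ J, t ≤ c j := by
  intro j hj
  by_contra hlt
  have hsub : filter (fun j => t ≤ c j) univ ⊆ J.erase j := fun j' hj' => by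
    have ht := (mem_filter.1 hj').2
    refine mem_erase.2 ⟨fun h => hlt (h ▸ ht), not_not.1 fun hj'J => ?_⟩
    exact hlt (ht.trans (hJ j hj j' hj'J))
  have := card_le_card hsub
  rw [card_erase_of_mem hj] at this
  have := card_pos.2 ⟨j, hj⟩
  omega

theorem sum_update_zero_eq_sum_erase [DecidableEq ι] (r : ι → ℕ) (i₀ : ι) (S : Finset ι) :
    ∑ i ∈ S, Function.update r i₀ 0 i = ∑ i ∈ S.erase i₀, r i := by
  rw [← sum_erase _ (Function.update_self i₀ 0 r)]
  exact sum_congr rfl fun i hi => Function.update_of_ne (ne_of_mem_erase hi) _ _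

theorem GaleRyserCondition.fill_row [DecidableEq ι] [DecidableEq κ] {r : ι → ℕ} {c : κ → ℕ}
    (h : GaleRyserCondition r c) {i₀ : ι} {J : Finset κ} (hJcard : #J = r i₀)
    (hJ : ∀ j ∈ J, ∀ j' ∉ J, c j' ≤ c j) (hJpos : ∀ j ∈ J, 1 ≤ c j) :
    GaleRyserCondition (Function.update r i₀ 0) (fun j => if j ∈ J then c j - 1 else c j) := by
  have away : ∀ S, i₀ ∉ S → ∑ i ∈ S, r i ≤ ∑ j, min #S (if j ∈ J then c j - 1 else c j) := by
    intro S hS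
    have hS' := h S
    have hinsS := h (insert i₀ S)
    rw [sum_insert hS, card_insert_of_notMem hS, sum_min_succ] at hinsS
    rw [sum_min_eq_sum_min_sub_one c _ hJpos] at hS' hinsS
    obtain hD | ⟨j₀, hj₀⟩ := eq_empty_or_nonempty (filter (fun j => j ∈ J ∧ c j ≤ #S) univ)
    · rw [hD, card_empty] at hS'
      omega
    · have hj₀ := (mem_filter.1 hj₀).2
      have hdisj : Disjoint (filter (fun j => j ∈ J ∧ c j ≤ #S) univ)
          (filter (fun j => #S + 1 ≤ c j) univ) :=
        disjoint_filter.2 fun j _ hj => by omega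
      have hsub : filter (fun j => j ∈ J ∧ c j ≤ #S) univ ∪ filter (fun j => #S + 1 ≤ c j) univ
          ⊆ J := by
        refine union_subset (fun j hj => (mem_filter.1 hj).2.1) fun j hj => not_not.1 fun hjJ => ?_
        have := hJ j₀ hj₀.1 j hjJ
        have := (mem_filter.1 hj).2
        omega
      have := card_le_card hsub
      rw [card_union_of_disjoint hdisj] at this
      omega
  intro S
  calc ∑ i ∈ S, Function.update r i₀ 0 i = ∑ i ∈ S.erase i₀, r i :=
        sum_update_zero_eq_sum_erase r i₀ S
    _ ≤ ∑ j, min #(S.erase i₀) (if j ∈ J then c j - 1 else c j) := away _ (notMem_erase i₀ S)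
    _ ≤ ∑ j, min #S (if j ∈ J then c j - 1 else c j) :=
        sum_le_sum fun _ _ => min_le_min_right _ card_erase_le

theorem IsZeroOneRealization.updateRow [Fintype ι] [DecidableEq ι] [DecidableEq κ]
    {A : Matrix ι κ ℕ} {r : ι → ℕ} {c : κ → ℕ} (hA : IsZeroOneRealization A r c) {i₀ : ι}
    (hi₀ : r i₀ = 0) (J : Finset κ) :
    IsZeroOneRealization (A.updateRow i₀ fun j => if j ∈ J then 1 else 0)
      (Function.update r i₀ #J) (fun j => c j + if j ∈ J then 1 else 0) := by
  obtain ⟨h01, hrow, hcol⟩ := hA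
  have hzero : ∀ j, A i₀ j = 0 := fun j =>
    sum_eq_zero_iff.1 ((hrow i₀).trans hi₀) j (mem_univ j)
  refine ⟨fun i j => ?_, fun i => ?_, fun j => ?_⟩
  · rw [Matrix.updateRow_apply]
    split_ifs
    exacts [le_rfl, zero_le_one, h01 i j]
  · by_cases hi : i = i₀
    · subst hi
      simp [Matrix.updateRow_self]
    · simp [hi, hrow]
  · have : ∀ i, A.updateRow i₀ (fun j => if j ∈ J then 1 else 0) i j =
        A i j + if i = i₀ then (if j ∈ J then 1 else 0) else 0 := fun i => by
      rw [Matrix.updateRow_apply]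
      split_ifs with hi <;> simp [hi, hzero]
    simp_rw [this, sum_add_distrib, hcol, sum_ite_eq', mem_univ, if_true]

theorem exists_isZeroOneRealization [Fintype ι] [DecidableEq ι] [DecidableEq κ] (r : ι → ℕ)
    (c : κ → ℕ) (hsum : ∑ i, r i = ∑ j, c j)
    (h : GaleRyserCondition r c) : ∃ A : Matrix ι κ ℕ, IsZeroOneRealization A r c := by
  obtain ⟨s, hs⟩ : ∃ s : Finset ι, ∀ i ∉ s, r i = 0 := ⟨univ, fun i hi => absurd (mem_univ i) hi⟩
  induction s using Finset.induction_on generalizing r c with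
  | empty =>
    have hr0 : ∀ i, r i = 0 := fun i => hs i (notMem_empty i)
    have hc0 : ∀ j, c j = 0 := fun j =>
      sum_eq_zero_iff.1 (hsum ▸ sum_eq_zero fun i _ => hr0 i) j (mem_univ j)
    exact ⟨0, fun _ _ => zero_le_one, fun i => by simp [hr0], fun j => by simp [hc0]⟩
  | insert i₀ s _ ih =>
    have hi₀ : r i₀ ≤ #{j | 1 ≤ c j} := by simpa [sum_min_succ] using h {i₀}
    obtain ⟨J, hJcard, hJ⟩ := exists_card_eq_forall_notMem_le c (hi₀.trans (card_le_univ _))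
    have hJpos : ∀ j ∈ J, 1 ≤ c j := le_of_mem_of_card_le_card_filter hJ (hJcard ▸ hi₀)
    have hc' : (fun j => (if j ∈ J then c j - 1 else c j) + if j ∈ J then 1 else 0) = c := by
      funext j
      split_ifs with hj
      exacts [Nat.sub_add_cancel (hJpos j hj), rfl]
    have hsum' : ∑ i, Function.update r i₀ 0 i = ∑ j, if j ∈ J then c j - 1 else c j := by
      have hrsum := sum_erase_add univ r (mem_univ i₀)
      have hcsum : ∑ j, c j = (∑ j, if j ∈ J then c j - 1 else c j) + #J := by
        conv_lhs => rw [← hc']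
        rw [sum_add_distrib, sum_boole]
        simp
      rw [sum_update_zero_eq_sum_erase]
      omega
    have hs' : ∀ i ∉ s, Function.update r i₀ 0 i = 0 := fun i hi => by
      rw [Function.update_apply]
      split_ifs with hii₀
      exacts [rfl, hs i (by simp [hii₀, hi])]
    obtain ⟨A, hA⟩ := ih (Function.update r i₀ 0) _ hsum' (h.fill_row hJcard hJ hJpos) hs'
    have hr' : Function.update (Function.update r i₀ 0) i₀ #J = r := by
      rw [Function.update_idem, hJcard, Function.update_eq_self]
    exact ⟨_, hr' ▸ hc' ▸ hA.updateRow (Function.update_self i₀ 0 r) J⟩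

theorem zero_one_matrix_cut_criterion_general (m n : ℕ) (r : Fin m → ℕ) (c : Fin n → ℕ)
    (hsum : ∑ i, r i = ∑ j, c j) :
    (∃ A : Matrix (Fin m) (Fin n) ℕ, ZeroOne A ∧ rowSum A = r ∧ colSum A = c) ↔
    (∀ S : Finset (Fin m), ∀ T : Finset (Fin n),
      ∑ i ∈ S, r i ≤ S.card * (n - T.card) + ∑ j ∈ T, c j) := by
  have hreal : ∀ A : Matrix (Fin m) (Fin n) ℕ,
      ZeroOne A ∧ rowSum A = r ∧ colSum A = c ↔ IsZeroOneRealization A r c := fun A => by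
    simp only [ZeroOne, rowSum, colSum, funext_iff, IsZeroOneRealization]
  have hcut := galeRyserCondition_iff_cut r c
  simp only [Fintype.card_fin] at hcut
  simp only [hreal, ← hcut]
  exact ⟨fun ⟨_, hA⟩ => hA.galeRyserCondition,
    exists_isZeroOneRealization r c hsum⟩

/-- Gale–Hoffman / max-flow min-cut criterion: a (0,1)-matrix with row sums r
and column sums c exists iff for all subsets S of rows and T of columns,
∑_{i ∈ S} r i ≤ |S| * (n - |T|) + ∑_{j ∈ T} c j. -/
theorem zero_one_matrix_cut_criterion (m n : ℕ) (r : Fin m → ℕ) (c : Fin n → ℕ)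
    (hrn : ∀ i, r i ≤ n) (hcm : ∀ j, c j ≤ m) (hsum : ∑ i, r i = ∑ j, c j) :
    (∃ A : Matrix (Fin m) (Fin n) ℕ, ZeroOne A ∧ rowSum A = r ∧ colSum A = c) ↔
    (∀ S : Finset (Fin m), ∀ T : Finset (Fin n),
      ∑ i ∈ S, r i ≤ S.card * (n - T.card) + ∑ j ∈ T, c j) :=
  zero_one_matrix_cut_criterion_general m n r c hsum
end

section
/- If r is a nonincreasing tuple majorized by s, and s is the conjugate of a nonincreasing tuple c with c_1 ≤ m, then there exists a monotone matrix A ∈ {0,1}^{m×n} with row sums exactly r and column sums exactly c (the 'if' direction of the Gale–Ryser theorem). -/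
section GRhelpers

lemma fin_Iic_succ {m : ℕ} (k : ℕ) (hk : k + 1 < m) :
    Finset.Iic (⟨k+1, hk⟩ : Fin m) = insert ⟨k+1, hk⟩ (Finset.Iic ⟨k, by omega⟩) := by
  ext x
  simp [Fin.le_def, Fin.ext_iff]
  omega

lemma sum_Iic_succ {m : ℕ} (f : Fin m → ℕ) (k : ℕ) (hk : k + 1 < m) :
    ∑ x ∈ Finset.Iic (⟨k+1, hk⟩ : Fin m), f x
      = f ⟨k+1, hk⟩ + ∑ x ∈ Finset.Iic (⟨k, by omega⟩ : Fin m), f x := by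
  rw [fin_Iic_succ k hk, Finset.sum_insert (by simp [Fin.le_def])]

lemma fin_Iic_zero {m : ℕ} (h0 : 0 < m) :
    Finset.Iic (⟨0, h0⟩ : Fin m) = {⟨0, h0⟩} := by
  ext x
  simp only [Finset.mem_Iic, Finset.mem_singleton, Fin.le_def, Fin.ext_iff]
  omega

lemma sum_Iic_bot {m : ℕ} (f : Fin m → ℕ) (h0 : 0 < m) :
    ∑ x ∈ Finset.Iic (⟨0, h0⟩ : Fin m), f x = f ⟨0, h0⟩ := by
  rw [fin_Iic_zero, Finset.sum_singleton]

lemma sum_Iic_pred {m : ℕ} (f : Fin m → ℕ) (q : ℕ) (hq : q < m) (hq1 : 1 ≤ q) :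
    ∑ x ∈ Finset.Iic (⟨q, hq⟩ : Fin m), f x
      = f ⟨q, hq⟩ + ∑ x ∈ Finset.Iic (⟨q-1, by omega⟩ : Fin m), f x := by
  have heq' : (⟨q, hq⟩ : Fin m) = ⟨(q-1)+1, by omega⟩ := by apply Fin.ext; simp; omega
  rw [heq', sum_Iic_succ]

lemma fin_Iic_top {m : ℕ} (h0 : 0 < m) :
    Finset.Iic (⟨m-1, by omega⟩ : Fin m) = Finset.univ := by
  ext x
  simp [Fin.le_def]
  omega

lemma antitone_of_succ {m : ℕ} {f : Fin m → ℕ}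
    (h : ∀ k (hk : k+1 < m), f ⟨k+1, hk⟩ ≤ f ⟨k, by omega⟩) : Antitone f := by
  have key : ∀ d a (h2 : a + d < m), f ⟨a + d, h2⟩ ≤ f ⟨a, by omega⟩ := by
    intro d
    induction d with
    | zero => intro a h2; simp
    | succ d ih =>
        intro a h2
        have h3 : a + d + 1 < m := by omega
        have e : (⟨a + (d+1), h2⟩ : Fin m) = ⟨(a+d)+1, h3⟩ := by
          apply Fin.ext; simp; omega
        rw [e]
        exact le_trans (h (a+d) h3) (ih a (by omega))
  intro a b hab
  calc f b = f ⟨(a : ℕ) + ((b : ℕ) - a), by omega⟩ := by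
        congr 1; apply Fin.ext; simp; omega
    _ ≤ f ⟨(a:ℕ), a.isLt⟩ := key _ _ _
    _ = f a := by congr 1

lemma ptwise {m : ℕ} {r s : Fin m → ℕ} (k : ℕ) (hk : k < m)
    (h : ∀ k' (hk' : k' < m), k' ≤ k → ∑ x ∈ Finset.Iic (⟨k', hk'⟩ : Fin m), r x = ∑ x ∈ Finset.Iic (⟨k', hk'⟩ : Fin m), s x) :
    r ⟨k, hk⟩ = s ⟨k, hk⟩ := by
  cases k with
  | zero =>
      have := h 0 hk (le_refl 0)
      rwa [fin_Iic_zero, Finset.sum_singleton, Finset.sum_singleton] at this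
  | succ k =>
      have h1 := h (k+1) hk (le_refl _)
      have h2 := h k (by omega) (by omega)
      rw [sum_Iic_succ, sum_Iic_succ] at h1
      omega

lemma young {m n : ℕ} (c : Fin n → ℕ) (hcm : ∀ j, c j ≤ m) :
    ∃ A : Matrix (Fin m) (Fin n) ℕ, ZeroOne A ∧ rowSum A = conjTuple m c ∧ colSum A = c := by
  refine ⟨fun i j => if (i : ℕ) + 1 ≤ c j then 1 else 0, ?_, ?_, ?_⟩
  · intro i j; simp only []; split <;> omega
  · funext i
    simp only [rowSum, conjTuple]
    rw [Finset.card_filter]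
  · funext j
    simp only [colSum]
    rw [← Finset.card_filter]
    have e1 : (Finset.univ.filter (fun i : Fin m => (i : ℕ) + 1 ≤ c j)).card
        = ∑ i : Fin m, (fun t : ℕ => if t + 1 ≤ c j then 1 else 0) (i : ℕ) := by
      rw [← Finset.card_filter]
    rw [e1, Fin.sum_univ_eq_sum_range (fun t : ℕ => if t + 1 ≤ c j then 1 else 0) m,
      ← Finset.card_filter]
    have e2 : (Finset.range m).filter (fun t => t + 1 ≤ c j) = Finset.range (c j) := by
      ext t
      simp only [Finset.mem_filter, Finset.mem_range]
      have := hcm j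
      omega
    rw [e2, Finset.card_range]

lemma antitone_conjTuple {m n : ℕ} (c : Fin n → ℕ) : Antitone (conjTuple m c) := by
  intro a b hab
  apply Finset.card_le_card
  intro x hx
  simp only [Finset.mem_filter, Finset.mem_univ, true_and] at hx ⊢
  have : (a : ℕ) ≤ b := hab
  omega

lemma le_mk {m : ℕ} {a : Fin m} {k : ℕ} {hk : k < m} (h : (a : ℕ) ≤ k) : a ≤ ⟨k, hk⟩ :=
  Fin.le_def.mpr h

lemma mk_le {m : ℕ} {a : Fin m} {k : ℕ} {hk : k < m} (h : k ≤ (a : ℕ)) : (⟨k, hk⟩ : Fin m) ≤ a :=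
  Fin.le_def.mpr h

lemma ne_mk {m : ℕ} {a : Fin m} {k : ℕ} {hk : k < m} (h : (a : ℕ) ≠ k) : a ≠ ⟨k, hk⟩ :=
  fun e => h (by rw [e])

lemma exists_matrix {m n : ℕ} (c : Fin n → ℕ) (s : Fin m → ℕ) (hs : Antitone s)
    (hbase : ∃ A : Matrix (Fin m) (Fin n) ℕ, ZeroOne A ∧ rowSum A = s ∧ colSum A = c) :
    ∀ N (r : Fin m → ℕ), Antitone r →
      (∀ h : Fin m, ∑ x ∈ Finset.Iic h, r x ≤ ∑ x ∈ Finset.Iic h, s x) →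
      (∑ x, r x = ∑ x, s x) →
      (∑ h : Fin m, (∑ x ∈ Finset.Iic h, s x - ∑ x ∈ Finset.Iic h, r x)) = N →
      ∃ A : Matrix (Fin m) (Fin n) ℕ, ZeroOne A ∧ rowSum A = r ∧ colSum A = c := by
  intro N
  induction N using Nat.strong_induction_on with
  | _ N IH =>
  intro r hr hmaj htot hN
  classical
  rcases Nat.eq_zero_or_pos N with h0 | hpos
  · -- base case : r = s
    subst h0
    have hall : ∀ h : Fin m, ∑ x ∈ Finset.Iic h, s x - ∑ x ∈ Finset.Iic h, r x = 0 := by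
      intro h
      by_contra hne
      have h1 : 0 < ∑ h : Fin m, (∑ x ∈ Finset.Iic h, s x - ∑ x ∈ Finset.Iic h, r x) :=
        Finset.sum_pos' (fun _ _ => Nat.zero_le _) ⟨h, Finset.mem_univ h, by omega⟩
      omega
    have hrs : r = s := by
      funext h
      have key := ptwise (r := r) (s := s) h.val h.isLt (by
        intro k' hk' _
        have h1 := hall ⟨k', hk'⟩
        have h2 := hmaj ⟨k', hk'⟩
        omega)
      simpa using key
    rwa [hrs]
  · -- inductive step
    have hex : ∃ k : ℕ, ∃ hk : k < m,
        (∑ x ∈ Finset.Iic (⟨k, hk⟩ : Fin m), r x) + 1 ≤ ∑ x ∈ Finset.Iic (⟨k, hk⟩ : Fin m), s x := by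
      by_contra hcon
      push_neg at hcon
      have hz : ∀ h : Fin m, (∑ x ∈ Finset.Iic h, s x - ∑ x ∈ Finset.Iic h, r x) = 0 := by
        intro h
        have h1 := hcon h.val h.isLt
        simp only [Fin.eta] at h1
        omega
      rw [Finset.sum_eq_zero (fun h _ => hz h)] at hN
      omega
    obtain ⟨i, him, hiRS, hmin⟩ :
        ∃ i, ∃ him : i < m,
          ((∑ x ∈ Finset.Iic (⟨i, him⟩ : Fin m), r x) + 1 ≤ ∑ x ∈ Finset.Iic (⟨i, him⟩ : Fin m), s x) ∧
          (∀ k (hk : k < m), k < i →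
            ∑ x ∈ Finset.Iic (⟨k, hk⟩ : Fin m), r x = ∑ x ∈ Finset.Iic (⟨k, hk⟩ : Fin m), s x) := by
      obtain ⟨him, hiRS⟩ := Nat.find_spec hex
      refine ⟨Nat.find hex, him, hiRS, ?_⟩
      intro k hk hki
      have h1 := Nat.find_min hex hki
      push_neg at h1
      have h2 := h1 hk
      have h3 := hmaj ⟨k, hk⟩
      omega
    obtain ⟨q, hiq, hqm, hq2, hmid⟩ :
        ∃ q, i < q ∧ q ≤ m ∧
          (∀ hk : q < m, ∑ x ∈ Finset.Iic (⟨q, hk⟩ : Fin m), s x ≤ ∑ x ∈ Finset.Iic (⟨q, hk⟩ : Fin m), r x) ∧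
          (∀ k (hk : k < m), i ≤ k → k < q →
            (∑ x ∈ Finset.Iic (⟨k, hk⟩ : Fin m), r x) + 1 ≤ ∑ x ∈ Finset.Iic (⟨k, hk⟩ : Fin m), s x) := by
      have hQex : ∃ k : ℕ, i < k ∧ ∀ hk : k < m,
          ∑ x ∈ Finset.Iic (⟨k, hk⟩ : Fin m), s x ≤ ∑ x ∈ Finset.Iic (⟨k, hk⟩ : Fin m), r x :=
        ⟨m, him, fun hk => absurd hk (lt_irrefl m)⟩
      obtain ⟨hiq, hq2⟩ := Nat.find_spec hQex
      refine ⟨Nat.find hQex, hiq, Nat.find_le ⟨him, fun hk => absurd hk (lt_irrefl m)⟩, hq2, ?_⟩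
      intro k hk hik hkq
      rcases Nat.eq_or_lt_of_le hik with he | hlt
      · subst he; exact hiRS
      · have h1 := Nat.find_min hQex hkq
        push_neg at h1
        obtain ⟨hk', h2⟩ := h1 hlt
        have h3 := hmaj ⟨k, hk⟩
        omega
    have hm0 : 0 < m := by omega
    have hq : q < m := by
      rcases Nat.eq_or_lt_of_le hqm with he | hlt
      · exfalso
        have h1 := hmid (m-1) (by omega) (by omega) (by omega)
        rw [fin_Iic_top hm0] at h1
        omega
      · exact hlt
    have hqeq : ∑ x ∈ Finset.Iic (⟨q, hq⟩ : Fin m), r x = ∑ x ∈ Finset.Iic (⟨q, hq⟩ : Fin m), s x :=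
      le_antisymm (hmaj _) (hq2 hq)
    -- scalar facts
    have hrq : s ⟨q, hq⟩ + 1 ≤ r ⟨q, hq⟩ := by
      have h1 := hmid (q-1) (by omega) (by omega) (by omega)
      have h2 := sum_Iic_pred r q hq (by omega)
      have h3 := sum_Iic_pred s q hq (by omega)
      omega
    have hris : r ⟨i, him⟩ + 1 ≤ s ⟨i, him⟩ := by
      rcases Nat.eq_zero_or_pos i with hi0 | hi0
      · subst hi0
        have h1 := sum_Iic_bot r him
        have h2 := sum_Iic_bot s him
        omega
      · have h1 := sum_Iic_pred r i him hi0
        have h2 := sum_Iic_pred s i him hi0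
        have h3 := hmin (i-1) (by omega) (by omega)
        omega
    have hval : ∀ k (hk : k < m), k < i → r ⟨k, hk⟩ = s ⟨k, hk⟩ := by
      intro k hk hki
      exact ptwise k hk (fun k' hk' hk'k => hmin k' hk' (by omega))
    have hioj : (⟨i, him⟩ : Fin m) ≠ ⟨q, hq⟩ := ne_mk (show i ≠ q by omega)
    -- quantified value facts
    have hri' : ∀ a b : Fin m, (a : ℕ) + 1 = i → (b : ℕ) = i → r b + 1 ≤ r a := by
      intro a b ha hb
      have e : b = ⟨i, him⟩ := Fin.ext hb
      have h3 : r a = s a := by simpa using hval a.val a.isLt (by omega)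
      have h4 : s ⟨i, him⟩ ≤ s a := hs (le_mk (show (a : ℕ) ≤ i by omega))
      rw [e]
      omega
    have hqs' : ∀ b : Fin m, (b : ℕ) = q + 1 → r b + 1 ≤ r ⟨q, hq⟩ := by
      intro b hb
      obtain ⟨bv, hblt⟩ := b
      have hb' : bv = q + 1 := hb
      subst hb'
      have h1 := hmaj ⟨q+1, hblt⟩
      have h2 := sum_Iic_succ r q hblt
      have h3 := sum_Iic_succ s q hblt
      have h5 : s ⟨q+1, hblt⟩ ≤ s ⟨q, hq⟩ := hs (mk_le (show q ≤ q+1 by omega))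
      omega
    -- the new tuple r'
    set r' : Fin m → ℕ := fun h =>
      if h = ⟨i, him⟩ then r h + 1 else if h = ⟨q, hq⟩ then r h - 1 else r h with hr'def
    have hr'io : r' ⟨i, him⟩ = r ⟨i, him⟩ + 1 := by simp [hr'def]
    have hr'jo : r' ⟨q, hq⟩ = r ⟨q, hq⟩ - 1 := by simp [hr'def, hioj.symm]
    have hr'other : ∀ h : Fin m, h ≠ ⟨i, him⟩ → h ≠ ⟨q, hq⟩ → r' h = r h := by
      intro h h1 h2; simp [hr'def, h1, h2]
    have hrjo1 : 1 ≤ r ⟨q, hq⟩ := by omega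
    -- antitonicity of r'
    have hr' : Antitone r' := by
      apply antitone_of_succ
      intro k hk
      have hkm : k < m := by omega
      have hab : r ⟨k+1, hk⟩ ≤ r ⟨k, hkm⟩ := hr (Fin.mk_le_mk.mpr (by omega))
      by_cases e1 : (⟨k+1, hk⟩ : Fin m) = ⟨i, him⟩
      · have hb : k + 1 = i := congrArg Fin.val e1
        have ha1 : (⟨k, hkm⟩ : Fin m) ≠ ⟨i, him⟩ := ne_mk (show k ≠ i by omega)
        have ha2 : (⟨k, hkm⟩ : Fin m) ≠ ⟨q, hq⟩ := ne_mk (show k ≠ q by omega)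
        rw [e1, hr'io, hr'other _ ha1 ha2]
        exact hri' ⟨k, hkm⟩ ⟨i, him⟩ (show k + 1 = i from hb) rfl
      · by_cases e2 : (⟨k+1, hk⟩ : Fin m) = ⟨q, hq⟩
        · have hb : k + 1 = q := congrArg Fin.val e2
          rw [e2, hr'jo]
          by_cases e3 : (⟨k, hkm⟩ : Fin m) = ⟨i, him⟩
          · rw [e3, hr'io]
            have h5 : r ⟨q, hq⟩ ≤ r ⟨i, him⟩ := hr (Fin.mk_le_mk.mpr (by omega))
            omega
          · have ha2 : (⟨k, hkm⟩ : Fin m) ≠ ⟨q, hq⟩ := ne_mk (show k ≠ q by omega)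
            rw [hr'other _ e3 ha2]
            have h5 : r ⟨q, hq⟩ ≤ r ⟨k, hkm⟩ := e2 ▸ hab
            omega
        · rw [hr'other _ e1 e2]
          by_cases e3 : (⟨k, hkm⟩ : Fin m) = ⟨i, him⟩
          · rw [e3, hr'io]
            have h5 : r ⟨k+1, hk⟩ ≤ r ⟨i, him⟩ := e3 ▸ hab
            omega
          · by_cases e4 : (⟨k, hkm⟩ : Fin m) = ⟨q, hq⟩
            · rw [e4, hr'jo]
              have hkq : k = q := congrArg Fin.val e4
              have h5 := hqs' ⟨k+1, hk⟩ (show k + 1 = q + 1 by omega)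
              have h6 : r ⟨q, hq⟩ = r ⟨k, hkm⟩ := by rw [e4]
              omega
            · rw [hr'other _ e3 e4]
              exact hab
    -- partial sums of r'
    have sumA : ∀ h : Fin m, (h : ℕ) < i →
        ∑ x ∈ Finset.Iic h, r' x = ∑ x ∈ Finset.Iic h, r x := by
      intro h hh
      apply Finset.sum_congr rfl
      intro x hx
      have hx' : (x : ℕ) ≤ (h : ℕ) := Fin.le_def.mp (Finset.mem_Iic.mp hx)
      exact hr'other x (ne_mk (by omega)) (ne_mk (by omega))
    have sumB : ∀ h : Fin m, i ≤ (h : ℕ) → (h : ℕ) < q →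
        ∑ x ∈ Finset.Iic h, r' x = (∑ x ∈ Finset.Iic h, r x) + 1 := by
      intro h h1 h2
      have e : ∀ x ∈ Finset.Iic h, r' x = r x + (if x = ⟨i, him⟩ then 1 else 0) := by
        intro x hx
        have hx' : (x : ℕ) ≤ (h : ℕ) := Fin.le_def.mp (Finset.mem_Iic.mp hx)
        by_cases ex : x = ⟨i, him⟩
        · rw [ex, hr'io, if_pos rfl]
        · rw [hr'other x ex (ne_mk (by omega)), if_neg ex]
          omega
      rw [Finset.sum_congr rfl e, Finset.sum_add_distrib,
        Finset.sum_ite_eq' (Finset.Iic h) (⟨i, him⟩ : Fin m) (fun _ => 1),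
        if_pos (Finset.mem_Iic.mpr (mk_le (show i ≤ (h : ℕ) from h1)))]
    have sumC : ∀ h : Fin m, q ≤ (h : ℕ) →
        ∑ x ∈ Finset.Iic h, r' x = ∑ x ∈ Finset.Iic h, r x := by
      intro h hh
      have e : ∀ x ∈ Finset.Iic h, r' x + (if x = ⟨q, hq⟩ then 1 else 0)
          = r x + (if x = ⟨i, him⟩ then 1 else 0) := by
        intro x hx
        by_cases exi : x = ⟨i, him⟩
        · rw [exi, hr'io, if_pos rfl, if_neg hioj]
        · by_cases exq : x = ⟨q, hq⟩
          · rw [exq, hr'jo, if_pos rfl, if_neg (fun hh' => hioj hh'.symm)]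
            omega
          · rw [hr'other x exi exq, if_neg exi, if_neg exq]
      have e2 := Finset.sum_congr rfl e
      rw [Finset.sum_add_distrib, Finset.sum_add_distrib,
        Finset.sum_ite_eq' (Finset.Iic h) (⟨q, hq⟩ : Fin m) (fun _ => 1),
        Finset.sum_ite_eq' (Finset.Iic h) (⟨i, him⟩ : Fin m) (fun _ => 1),
        if_pos (Finset.mem_Iic.mpr (mk_le (show q ≤ (h : ℕ) from hh))),
        if_pos (Finset.mem_Iic.mpr (mk_le (show i ≤ (h : ℕ) by omega)))] at e2
      omega
    -- majorization for r'
    have hmaj' : ∀ h : Fin m, ∑ x ∈ Finset.Iic h, r' x ≤ ∑ x ∈ Finset.Iic h, s x := by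
      intro h
      rcases lt_or_ge (h : ℕ) i with hh | hh
      · rw [sumA h hh]; exact hmaj h
      · rcases lt_or_ge (h : ℕ) q with hh2 | hh2
        · rw [sumB h hh hh2]
          have := hmid h.val h.isLt hh hh2
          simpa using this
        · rw [sumC h hh2]; exact hmaj h
    have htot' : ∑ x, r' x = ∑ x, s x := by
      have h1 := sumC ⟨m-1, by omega⟩ (show q ≤ m - 1 by omega)
      rw [fin_Iic_top hm0] at h1
      omega
    -- the measure decreases
    have hNlt : (∑ h : Fin m, (∑ x ∈ Finset.Iic h, s x - ∑ x ∈ Finset.Iic h, r' x)) < N := by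
      rw [← hN]
      apply Finset.sum_lt_sum
      · intro h _
        rcases lt_or_ge (h : ℕ) i with hh | hh
        · rw [sumA h hh]
        · rcases lt_or_ge (h : ℕ) q with hh2 | hh2
          · rw [sumB h hh hh2]; omega
          · rw [sumC h hh2]
      · refine ⟨⟨i, him⟩, Finset.mem_univ _, ?_⟩
        have h1 := sumB ⟨i, him⟩ (le_refl i) hiq
        omega
    obtain ⟨A', hA'01, hA'row, hA'col⟩ := IH _ hNlt r' hr' hmaj' htot' rfl
    -- move one 1 from row ⟨i⟩ to row ⟨q⟩
    have hrowio : ∑ b, A' ⟨i, him⟩ b = r ⟨i, him⟩ + 1 := by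
      have h1 : rowSum A' ⟨i, him⟩ = r' ⟨i, him⟩ := congrFun hA'row _
      rw [hr'io] at h1
      exact h1
    have hrowjo : ∑ b, A' ⟨q, hq⟩ b = r ⟨q, hq⟩ - 1 := by
      have h1 : rowSum A' ⟨q, hq⟩ = r' ⟨q, hq⟩ := congrFun hA'row _
      rw [hr'jo] at h1
      exact h1
    have hrle : r ⟨q, hq⟩ ≤ r ⟨i, him⟩ := hr (Fin.mk_le_mk.mpr (by omega))
    obtain ⟨t, ht⟩ : ∃ t, A' ⟨q, hq⟩ t < A' ⟨i, him⟩ t := by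
      by_contra hcon
      push_neg at hcon
      have h1 : ∑ b, A' ⟨i, him⟩ b ≤ ∑ b, A' ⟨q, hq⟩ b :=
        Finset.sum_le_sum (fun b _ => hcon b)
      omega
    have hio1 : A' ⟨i, him⟩ t = 1 := by have := hA'01 ⟨i, him⟩ t; omega
    have hjo0 : A' ⟨q, hq⟩ t = 0 := by omega
    -- the new matrix
    set A : Matrix (Fin m) (Fin n) ℕ := fun a b =>
      if a = ⟨i, him⟩ then (if b = t then 0 else A' a b)
      else if a = ⟨q, hq⟩ then (if b = t then 1 else A' a b) else A' a b with hAdef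
    have hA01 : ZeroOne A := by
      intro a b
      simp only [hAdef]
      split_ifs <;> first | omega | exact hA'01 a b
    refine ⟨A, hA01, ?_, ?_⟩
    · -- row sums
      funext a
      by_cases ha1 : a = ⟨i, him⟩
      · have h3 : rowSum A a = ∑ b, Function.update (A' a) t 0 b := by
          apply Finset.sum_congr rfl
          intro b _
          rw [Function.update_apply]
          simp [hAdef, ha1]
        have h1 : ∑ b, Function.update (A' a) t 0 b = 0 + ∑ b ∈ Finset.univ \ {t}, A' a b :=
          Finset.sum_update_of_mem (Finset.mem_univ t) _ _
        have h2 : ∑ b, A' a b = ∑ b ∈ Finset.univ \ {t}, A' a b + A' a t :=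
          Finset.sum_eq_sum_sdiff_singleton_add (Finset.mem_univ t) _
        have h4 : ∑ b, A' a b = r a + 1 := by rw [ha1]; exact hrowio
        have h5 : A' a t = 1 := by rw [ha1]; exact hio1
        show rowSum A a = r a
        omega
      · by_cases ha2 : a = ⟨q, hq⟩
        · have h3 : rowSum A a = ∑ b, Function.update (A' a) t 1 b := by
            apply Finset.sum_congr rfl
            intro b _
            rw [Function.update_apply]
            simp [hAdef, ha1, ha2, show ¬ q = i by omega]
          have h1 : ∑ b, Function.update (A' a) t 1 b = 1 + ∑ b ∈ Finset.univ \ {t}, A' a b :=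
            Finset.sum_update_of_mem (Finset.mem_univ t) _ _
          have h2 : ∑ b, A' a b = ∑ b ∈ Finset.univ \ {t}, A' a b + A' a t :=
            Finset.sum_eq_sum_sdiff_singleton_add (Finset.mem_univ t) _
          have h4 : ∑ b, A' a b = r a - 1 := by rw [ha2]; exact hrowjo
          have h5 : A' a t = 0 := by rw [ha2]; exact hjo0
          have h6 : 1 ≤ r a := by rw [ha2]; exact hrjo1
          show rowSum A a = r a
          omega
        · have h3 : rowSum A a = rowSum A' a := by
            apply Finset.sum_congr rfl
            intro b _
            simp [hAdef, ha1, ha2]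
          rw [h3, hA'row, hr'other a ha1 ha2]
    · -- column sums
      funext b
      by_cases hb : b = t
      · subst hb
        have e : ∀ a : Fin m, A a b + (if a = ⟨i, him⟩ then 1 else 0)
            = A' a b + (if a = ⟨q, hq⟩ then 1 else 0) := by
          intro a
          by_cases ha1 : a = ⟨i, him⟩
          · have h5 : A' a b = 1 := by rw [ha1]; exact hio1
            have h6 : A a b = 0 := by simp [hAdef, ha1]
            rw [if_pos ha1, if_neg (by rw [ha1]; exact hioj), h5, h6]
          · by_cases ha2 : a = ⟨q, hq⟩
            · have h5 : A' a b = 0 := by rw [ha2]; exact hjo0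
              have h6 : A a b = 1 := by simp [hAdef, ha1, ha2, show ¬ q = i by omega]
              rw [if_neg ha1, if_pos ha2, h5, h6]
            · have h6 : A a b = A' a b := by simp [hAdef, ha1, ha2]
              rw [if_neg ha1, if_neg ha2, h6]
        have e2 := Finset.sum_congr rfl (fun a (_ : a ∈ Finset.univ) => e a)
        rw [Finset.sum_add_distrib, Finset.sum_add_distrib,
          Finset.sum_ite_eq' Finset.univ (⟨i, him⟩ : Fin m) (fun _ => 1),
          Finset.sum_ite_eq' Finset.univ (⟨q, hq⟩ : Fin m) (fun _ => 1),
          if_pos (Finset.mem_univ _), if_pos (Finset.mem_univ _)] at e2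
        have h2 : colSum A' b = c b := congrFun hA'col b
        show colSum A b = c b
        simp only [colSum] at h2 ⊢
        omega
      · have h3 : colSum A b = colSum A' b := by
          apply Finset.sum_congr rfl
          intro a _
          simp [hAdef, hb]
        rw [h3, hA'col]

end GRhelpers

/-- The 'if' direction of Gale–Ryser: if nonincreasing r is majorized by the
conjugate of nonincreasing c, then a monotone (0,1)-matrix with row sums r and
column sums c exists. -/
theorem gale_ryser_if (m n : ℕ) (r : Fin m → ℕ) (c : Fin n → ℕ)
    (hr : Antitone r) (hc : Antitone c) (hcm : ∀ j, c j ≤ m)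
    (hmaj : MajorizedBy r (conjTuple m c)) :
    ∃ A : Matrix (Fin m) (Fin n) ℕ, ZeroOne A ∧ MonotoneMat A ∧
      rowSum A = r ∧ colSum A = c := by
  obtain ⟨A, h01, hrow, hcol⟩ := exists_matrix c (conjTuple m c) (antitone_conjTuple c)
    (young c hcm) _ r hr hmaj.1 hmaj.2 rfl
  exact ⟨A, h01, ⟨by rw [hrow]; exact hr, by rw [hcol]; exact hc⟩, hrow, hcol⟩
end

section
/- If c and c' are nonincreasing tuples of length n with components at most m, and c is majorized by c', then the conjugate s' of c' is majorized by the conjugate s of c (conjugation reverses majorization). -/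
lemma card_val_lt (m t : ℕ) (ht : t ≤ m) :
    (Finset.univ.filter (fun i : Fin m => (i : ℕ) < t)).card = t := by
  refine (Finset.card_bij (s := Finset.univ.filter (fun i : Fin m => (i : ℕ) < t))
    (t := Finset.range t) (fun i _ => (i : ℕ)) ?_ ?_ ?_).trans (Finset.card_range t)
  · intro a ha; simp at ha ⊢; exact ha
  · intro a _ b _ h; exact Fin.val_injective h
  · intro b hb
    simp only [Finset.mem_range] at hb
    exact ⟨⟨b, lt_of_lt_of_le hb ht⟩, by simp [hb], rfl⟩

lemma sum_conj_Iic (m n : ℕ) (c : Fin n → ℕ) (hcm : ∀ j, c j ≤ m) (h : Fin m) :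
    ∑ i ∈ Finset.Iic h, conjTuple m c i = ∑ j, min (c j) ((h : ℕ) + 1) := by
  simp only [conjTuple, Finset.card_filter]
  rw [Finset.sum_comm]
  refine Finset.sum_congr rfl fun j _ => ?_
  rw [← Finset.card_filter]
  have : (Finset.Iic h).filter (fun i : Fin m => (i : ℕ) + 1 ≤ c j)
      = Finset.univ.filter (fun i : Fin m => (i : ℕ) < min ((h : ℕ) + 1) (c j)) := by
    ext i
    simp only [Finset.mem_filter, Finset.mem_Iic, Finset.mem_univ, true_and, lt_min_iff,
      Nat.lt_succ_iff, Fin.le_def, Nat.succ_le_iff, and_comm]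
  rw [this, card_val_lt m _ (le_trans (min_le_right _ _) (hcm j)), min_comm]

lemma sum_conj_total (m n : ℕ) (c : Fin n → ℕ) (hcm : ∀ j, c j ≤ m) :
    ∑ i, conjTuple m c i = ∑ j, c j := by
  simp only [conjTuple, Finset.card_filter]
  rw [Finset.sum_comm]
  refine Finset.sum_congr rfl fun j _ => ?_
  rw [← Finset.card_filter]
  have : (Finset.univ.filter (fun i : Fin m => (i : ℕ) + 1 ≤ c j))
      = Finset.univ.filter (fun i : Fin m => (i : ℕ) < c j) := by
    ext i; simp [Nat.succ_le_iff]
  rw [this, card_val_lt m _ (hcm j)]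

lemma tsub_sum_le {ι : Type*} (s : Finset ι) (f g : ι → ℕ) :
    ∑ x ∈ s, f x - ∑ x ∈ s, g x ≤ ∑ x ∈ s, (f x - g x) := by
  rw [tsub_le_iff_right, ← Finset.sum_add_distrib]
  exact Finset.sum_le_sum fun x _ => le_tsub_add

lemma key_min (n : ℕ) (c c' : Fin n → ℕ) (hc : Antitone c)
    (hpre : ∀ h : Fin n, ∑ j ∈ Finset.Iic h, c j ≤ ∑ j ∈ Finset.Iic h, c' j)
    (hsum : ∑ j, c j = ∑ j, c' j) (k : ℕ) :
    ∑ j, min (c' j) k ≤ ∑ j, min (c j) k := by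
  have hmin : ∀ (a : ℕ), min a k = a - (a - k) := fun a => by omega
  simp only [hmin]
  rw [Finset.sum_tsub_distrib _ (fun x _ => Nat.sub_le _ _),
      Finset.sum_tsub_distrib _ (fun x _ => Nat.sub_le _ _), hsum]
  refine tsub_le_tsub_left ?_ _
  -- show ∑ (c j - k) ≤ ∑ (c' j - k)
  set T := Finset.univ.filter (fun j : Fin n => k < c j) with hT
  have hzero : ∀ j ∈ Finset.univ, j ∉ T → c j - k = 0 := by
    intro j _ hj
    simp [hT] at hj; omega
  rw [← Finset.sum_subset (Finset.subset_univ T) hzero]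
  rcases T.eq_empty_or_nonempty with hE | hne
  · simp [hE]
  · set h := T.max' hne with hh
    have hTeq : T = Finset.Iic h := by
      ext j
      simp only [hT, Finset.mem_filter, Finset.mem_univ, true_and, Finset.mem_Iic]
      constructor
      · intro hj; exact T.le_max' j (by simp [hT, hj])
      · intro hj
        have hhT : k < c h := by
          have := T.max'_mem hne
          simp [hT] at this; exact this
        exact lt_of_lt_of_le hhT (hc hj)
    have hk : ∀ j ∈ T, k ≤ c j := by
      intro j hj; simp [hT] at hj; omega
    calc ∑ j ∈ T, (c j - k) = ∑ j ∈ T, c j - ∑ j ∈ T, k :=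
          Finset.sum_tsub_distrib _ hk
      _ ≤ ∑ j ∈ T, c' j - ∑ j ∈ T, k := by
          rw [hTeq]; exact tsub_le_tsub_right (hpre h) _
      _ ≤ ∑ j ∈ T, (c' j - k) := tsub_sum_le _ _ _
      _ ≤ ∑ j, (c' j - k) := Finset.sum_le_sum_of_subset (Finset.subset_univ T)

/-- Conjugation reverses majorization: if c is majorized by c', then the
conjugate of c' is majorized by the conjugate of c. -/
theorem conjTuple_antitone_majorization (m n : ℕ) (c c' : Fin n → ℕ)
    (hc : Antitone c) (hc' : Antitone c')
    (hcm : ∀ j, c j ≤ m) (hcm' : ∀ j, c' j ≤ m)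
    (hmaj : MajorizedBy c c') :
    MajorizedBy (conjTuple m c') (conjTuple m c) := by
  constructor
  · intro h
    rw [sum_conj_Iic m n c' hcm' h, sum_conj_Iic m n c hcm h]
    exact key_min n c c' hc hmaj.1 hmaj.2 ((h : ℕ) + 1)
  · rw [sum_conj_total m n c' hcm', sum_conj_total m n c hcm]
    exact hmaj.2.symm
end
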